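/- If M is a Mittag-Leffler right R-module and, for each λ, L_λ is an (R,S)-bimodule, then the canonical map M⊗_R(∏_λ L_λ) → ∏_λ (M⊗_R L_λ) is a pure embedding of right S-modules. -/

import Mathlib

/-!
Core framework for formalizing statements from
"Tensor and direct extension of definable subcategories" (M. Prest).

Conventions:
* A *right* `R`-module is a type with `[AddCommGroup M] [Module Rᵐᵒᵖ M]`;
  the right action of `r : R` on `a : M` is `MulOpposite.op r • a`.
* A *left* `R`-module is a type with `[AddCommGroup L] [Module R L]`.
* An `(R,S)`-bimodule is a type with a left `R`-action and a right `S`-action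
  which commute: `[Module R B] [Module Sᵐᵒᵖ B] [SMulCommClass R Sᵐᵒᵖ B]`.
-/

open MulOpposite

universe u v

namespace MTM

/-- A pp formula for (right) `R`-modules, with free variables indexed by `ι`,
bound variables indexed by `κ` and equations indexed by `ε`:
`∃ ȳ (x̄ A + ȳ B = 0)`. -/
structure PP (R : Type u) [Ring R] (ι : Type) : Type (max u 1) where
  κ : Type
  ε : Type
  [fintκ : Fintype κ]
  [fintε : Fintype ε]
  A : Matrix ι ε R
  B : Matrix κ ε R

attribute [instance] PP.fintκ PP.fintε

namespace PP

variable {R : Type u} [Ring R] {S : Type u} [Ring S] {ι : Type} [Fintype ι]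

/-- The solution set of a pp formula in a right `R`-module. -/
def sol (φ : PP R ι) (M : Type v) [AddCommGroup M] [Module Rᵐᵒᵖ M] : Set (ι → M) :=
  { a | ∃ b : φ.κ → M, ∀ j : φ.ε,
      (∑ i, op (φ.A i j) • a i) + (∑ k, op (φ.B k j) • b k) = 0 }

/-- The solution set of a pp formula in a left `R`-module (the formula is then read
with coefficients acting on the left). -/
def solL (φ : PP R ι) (L : Type v) [AddCommGroup L] [Module R L] : Set (ι → L) :=
  { a | ∃ b : φ.κ → L, ∀ j : φ.ε,
      (∑ i, φ.A i j • a i) + (∑ k, φ.B k j • b k) = 0 }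

/-- `φ ≤ ψ` : every solution of `φ` is a solution of `ψ`, in every right `R`-module. -/
def Le (φ ψ : PP R ι) : Prop :=
  ∀ (M : Type u) [AddCommGroup M] [Module Rᵐᵒᵖ M], φ.sol M ⊆ ψ.sol M

/-- The elementary dual `Dφ = ∃ z̄ (x̄ = A z̄ ∧ B z̄ = 0)` of a pp formula for right modules;
it is a pp formula for left `R`-modules (to be interpreted via `solL`). -/
noncomputable def dual (φ : PP R ι) : PP R ι where
  κ := φ.ε
  ε := ι ⊕ φ.κ
  A := fun i e =>
    letI := Classical.decEq ι
    Sum.elim (fun i' => if i = i' then (1 : R) else 0) (fun _ => (0 : R)) e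
  B := fun z e => Sum.elim (fun i' => -(φ.A i' z)) (fun k => φ.B k z) e

/-- Transport of a pp formula along a ring homomorphism (`f⁎φ`). -/
def map (f : R →+* S) (φ : PP R ι) : PP S ι :=
  { κ := φ.κ, ε := φ.ε, A := fun i j => f (φ.A i j), B := fun k j => f (φ.B k j) }

end PP

variable (R : Type u) [Ring R] (S : Type u) [Ring S]

/-- A pp-pair `φ/ψ` for right `R`-modules: pp formulas (in `n` free variables)
with `ψ(M) ≤ φ(M)` for every right `R`-module `M`. -/
structure PPPair : Type (u + 1) where
  n : ℕ
  num : PP R (Fin n)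
  den : PP R (Fin n)
  le : ∀ (M : Type u) [AddCommGroup M] [Module Rᵐᵒᵖ M], den.sol M ⊆ num.sol M

/-- A pp-pair for left `R`-modules. -/
structure PPPairL : Type (u + 1) where
  n : ℕ
  num : PP R (Fin n)
  den : PP R (Fin n)
  le : ∀ (L : Type u) [AddCommGroup L] [Module R L], den.solL L ⊆ num.solL L

variable {R}

/-- A pp-pair is closed on a right module `M` if the two solution sets agree. -/
def PPPair.ClosedOn (p : PPPair R) (M : Type v) [AddCommGroup M] [Module Rᵐᵒᵖ M] : Prop :=
  p.num.sol M = p.den.sol M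

/-- A pp-pair is closed on a left module `L` if the two solution sets agree. -/
def PPPairL.ClosedOn (p : PPPairL R) (L : Type v) [AddCommGroup L] [Module R L] : Prop :=
  p.num.solL L = p.den.solL L

variable (R)

/-- The subcategory (class of modules, as a set of objects of `Mod-R`) defined by
closure of a set of pp-pairs. -/
def definedBy (Φ : Set (PPPair R)) : Set (ModuleCat.{u} Rᵐᵒᵖ) :=
  { M | ∀ p ∈ Φ, p.ClosedOn M }

/-- The subcategory of left modules defined by closure of a set of pp-pairs. -/
def definedByL (Φ : Set (PPPairL R)) : Set (ModuleCat.{u} R) :=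
  { L | ∀ p ∈ Φ, p.ClosedOn L }

/-- A class of right `R`-modules is a definable subcategory if it is the class of
modules on which each pp-pair in some set of pp-pairs is closed. -/
def IsDefinable (D : Set (ModuleCat.{u} Rᵐᵒᵖ)) : Prop :=
  ∃ Φ : Set (PPPair R), D = definedBy R Φ

/-- Definability for classes of left `R`-modules. -/
def IsDefinableL (D : Set (ModuleCat.{u} R)) : Prop :=
  ∃ Φ : Set (PPPairL R), D = definedByL R Φ

/-- `⟨X⟩`: the smallest definable subcategory of `Mod-R` containing `X`. -/
def gen (X : Set (ModuleCat.{u} Rᵐᵒᵖ)) : Set (ModuleCat.{u} Rᵐᵒᵖ) :=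
  ⋂₀ { D | IsDefinable R D ∧ X ⊆ D }

/-- `⟨X⟩` for classes of left modules. -/
def genL (X : Set (ModuleCat.{u} R)) : Set (ModuleCat.{u} R) :=
  ⋂₀ { D | IsDefinableL R D ∧ X ⊆ D }

/-- `φ ≤_𝒳 ψ` for a class `𝒳` of right `R`-modules. -/
def LeOn (𝒳 : Set (ModuleCat.{u} Rᵐᵒᵖ)) {ι : Type} [Fintype ι] (φ ψ : PP R ι) : Prop :=
  ∀ M ∈ 𝒳, φ.sol M ⊆ ψ.sol M

/-- A pure embedding of right `R`-modules: an injective linear map which reflects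
solution sets of pp formulas. -/
def IsPureEmb {M N : Type*} [AddCommGroup M] [Module Rᵐᵒᵖ M]
    [AddCommGroup N] [Module Rᵐᵒᵖ N] (f : M →ₗ[Rᵐᵒᵖ] N) : Prop :=
  Function.Injective f ∧
    ∀ (ι : Type) (_ : Fintype ι) (φ : PP R ι) (a : ι → M),
      (fun i => f (a i)) ∈ φ.sol N → a ∈ φ.sol M

/-- A pure-injective module: every pure embedding out of it splits. -/
def IsPureInj (N : Type u) [AddCommGroup N] [Module Rᵐᵒᵖ N] : Prop :=
  ∀ (M : Type u) [AddCommGroup M] [Module Rᵐᵒᵖ M] (g : N →ₗ[Rᵐᵒᵖ] M),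
    IsPureEmb R g → ∃ h : M →ₗ[Rᵐᵒᵖ] N, h.comp g = LinearMap.id

/-- `N` is an elementary cogenerator for the definable subcategory `D`:
a pure-injective member of `D` such that every member of `D` purely embeds in a
direct power of `N`. -/
def IsElemCogen (D : Set (ModuleCat.{u} Rᵐᵒᵖ)) (N : ModuleCat.{u} Rᵐᵒᵖ) : Prop :=
  N ∈ D ∧ IsPureInj R N ∧
    ∀ M ∈ D, ∃ (I : Type u) (g : M →ₗ[Rᵐᵒᵖ] (I → N)), IsPureEmb R g

/-- A pure-injective hull of `X`: a minimal pure embedding into a pure-injective. -/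
def IsPureInjHull {X H : Type u} [AddCommGroup X] [Module Rᵐᵒᵖ X]
    [AddCommGroup H] [Module Rᵐᵒᵖ H] (h : X →ₗ[Rᵐᵒᵖ] H) : Prop :=
  IsPureEmb R h ∧ IsPureInj R H ∧
    ∀ (Y : Type u) [AddCommGroup Y] [Module Rᵐᵒᵖ Y] (g : H →ₗ[Rᵐᵒᵖ] Y),
      IsPureEmb R (g.comp h) → IsPureEmb R g

section RingHom

variable (f : R →+* S)

/-- Restriction of scalars of a (bundled) right `S`-module along `f : R →+* S`. -/
noncomputable def resMod (M : ModuleCat.{u} Sᵐᵒᵖ) : ModuleCat.{u} Rᵐᵒᵖ :=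
  (ModuleCat.restrictScalars (RingHom.op f)).obj M

/-- The (definable) restriction `C|_R` of a definable subcategory `C` of `Mod-S`
along `f : R → S` : the subcategory of `Mod-R` defined by all pp-pairs `φ/ψ` for
`R`-modules such that `f⁎φ/f⁎ψ` is closed on `C`. -/
def restrictSubcat (C : Set (ModuleCat.{u} Sᵐᵒᵖ)) : Set (ModuleCat.{u} Rᵐᵒᵖ) :=
  definedBy R { p : PPPair R | ∀ M ∈ C, (p.num.map f).sol M = (p.den.map f).sol M }

/-- The definable trace of `Mod-S` in `Mod-R` along `f`. -/
def DefTr : Set (ModuleCat.{u} Rᵐᵒᵖ) := restrictSubcat R S f Set.univ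

/-- The direct extension `D^S` of a definable subcategory `D` of `Mod-R`:
those `S`-modules whose restriction along `f` lies in `D`. -/
def directExt (D : Set (ModuleCat.{u} Rᵐᵒᵖ)) : Set (ModuleCat.{u} Sᵐᵒᵖ) :=
  { M | resMod R S f M ∈ D }

end RingHom

end MTM
-- Tensor product over a (possibly noncommutative) ring.
namespace MTM

open MulOpposite TensorProduct

universe x
variable (R : Type u) [Ring R] (S : Type u) [Ring S]

section Tensor

variable (M : Type u) [AddCommGroup M] [Module Rᵐᵒᵖ M]
variable (B : Type u) [AddCommGroup B] [Module R B]

/-- The subgroup of `M ⊗_ℤ B` of balancing relations. -/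
def tensorRel : Submodule ℤ (TensorProduct ℤ M B) :=
  Submodule.span ℤ
    { x | ∃ (r : R) (m : M) (b : B), x = (op r • m) ⊗ₜ[ℤ] b - m ⊗ₜ[ℤ] (r • b) }

/-- The tensor product `M ⊗_R B` of a right `R`-module and a left `R`-module,
as the quotient of `M ⊗_ℤ B` by the balancing relations. -/
abbrev RTensor : Type u := TensorProduct ℤ M B ⧸ tensorRel R M B

/-- `m ⊗ b` in `M ⊗_R B`. -/
noncomputable def rtmul (m : M) (b : B) : RTensor R M B := Submodule.Quotient.mk (m ⊗ₜ[ℤ] b)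

variable {M B}
variable {M' : Type u} [AddCommGroup M'] [Module Rᵐᵒᵖ M']
variable {B' : Type u} [AddCommGroup B'] [Module R B']

theorem rel_le_B (g : B →ₗ[R] B') :
    tensorRel R M B ≤
      (tensorRel R M B').comap (LinearMap.lTensor M g.toAddMonoidHom.toIntLinearMap) := by
  refine Submodule.span_le.mpr ?_
  rintro x ⟨r, m, b, rfl⟩
  change LinearMap.lTensor M g.toAddMonoidHom.toIntLinearMap
    ((op r • m) ⊗ₜ[ℤ] b - m ⊗ₜ[ℤ] (r • b)) ∈ tensorRel R M B'
  have hx : LinearMap.lTensor M g.toAddMonoidHom.toIntLinearMap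
      ((op r • m) ⊗ₜ[ℤ] b - m ⊗ₜ[ℤ] (r • b)) = (op r • m) ⊗ₜ[ℤ] g b - m ⊗ₜ[ℤ] (r • g b) := by
    simp only [map_sub, LinearMap.lTensor_tmul,
      AddMonoidHom.coe_toIntLinearMap, LinearMap.toAddMonoidHom_coe]
    rw [g.map_smul]
  rw [hx]
  exact Submodule.subset_span ⟨r, m, g b, rfl⟩

theorem rel_le_M (h : M →ₗ[Rᵐᵒᵖ] M') :
    tensorRel R M B ≤
      (tensorRel R M' B).comap (LinearMap.rTensor B h.toAddMonoidHom.toIntLinearMap) := by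
  refine Submodule.span_le.mpr ?_
  rintro x ⟨r, m, b, rfl⟩
  change LinearMap.rTensor B h.toAddMonoidHom.toIntLinearMap
    ((op r • m) ⊗ₜ[ℤ] b - m ⊗ₜ[ℤ] (r • b)) ∈ tensorRel R M' B
  have hx : LinearMap.rTensor B h.toAddMonoidHom.toIntLinearMap
      ((op r • m) ⊗ₜ[ℤ] b - m ⊗ₜ[ℤ] (r • b)) = (op r • h m) ⊗ₜ[ℤ] b - h m ⊗ₜ[ℤ] (r • b) := by
    simp only [map_sub, LinearMap.rTensor_tmul,
      AddMonoidHom.coe_toIntLinearMap, LinearMap.toAddMonoidHom_coe]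
    rw [h.map_smul]
  rw [hx]
  exact Submodule.subset_span ⟨r, h m, b, rfl⟩

/-- Functoriality of `M ⊗_R -` in left `R`-module maps (as a `ℤ`-linear map). -/
noncomputable def mapB (g : B →ₗ[R] B') : RTensor R M B →ₗ[ℤ] RTensor R M B' :=
  Submodule.mapQ _ _ _ (rel_le_B R g)

/-- Functoriality of `- ⊗_R B` in right `R`-module maps (as a `ℤ`-linear map). -/
noncomputable def mapM (h : M →ₗ[Rᵐᵒᵖ] M') : RTensor R M B →ₗ[ℤ] RTensor R M' B :=
  Submodule.mapQ _ _ _ (rel_le_M R h)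

@[simp] theorem mapB_mk (g : B →ₗ[R] B') (y : TensorProduct ℤ M B) :
    mapB R g (Submodule.Quotient.mk y) =
      Submodule.Quotient.mk (LinearMap.lTensor M g.toAddMonoidHom.toIntLinearMap y) :=
  rfl

@[simp] theorem mapM_mk (h : M →ₗ[Rᵐᵒᵖ] M') (y : TensorProduct ℤ M B) :
    mapM R h (Submodule.Quotient.mk y) =
      Submodule.Quotient.mk (LinearMap.rTensor B h.toAddMonoidHom.toIntLinearMap y) :=
  rfl

section SAction

variable [Module Sᵐᵒᵖ B] [SMulCommClass R Sᵐᵒᵖ B]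

/-- The right action of `s : S` on an `(R,S)`-bimodule, as a left `R`-linear map. -/
def sEndo (s : Sᵐᵒᵖ) : B →ₗ[R] B where
  toFun b := s • b
  map_add' x y := smul_add s x y
  map_smul' r b := (smul_comm r s b).symm

variable (M B)

/-- The right `S`-action on `M ⊗_R B` as a ring homomorphism `Sᵐᵒᵖ → End_ℤ (M ⊗_R B)`. -/
noncomputable def rho : Sᵐᵒᵖ →+* Module.End ℤ (RTensor R M B) where
  toFun s := mapB R (sEndo R S (B := B) s)
  map_one' := by
    refine Submodule.linearMap_qext _ (TensorProduct.ext' fun m b => ?_)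
    change (Submodule.Quotient.mk (m ⊗ₜ[ℤ] ((1 : Sᵐᵒᵖ) • b)) : RTensor R M B) =
      Submodule.Quotient.mk (m ⊗ₜ[ℤ] b)
    rw [one_smul]
  map_mul' s s' := by
    refine Submodule.linearMap_qext _ (TensorProduct.ext' fun m b => ?_)
    change (Submodule.Quotient.mk (m ⊗ₜ[ℤ] ((s * s') • b)) : RTensor R M B) =
      Submodule.Quotient.mk (m ⊗ₜ[ℤ] (s • s' • b))
    rw [mul_smul]
  map_zero' := by
    refine Submodule.linearMap_qext _ (TensorProduct.ext' fun m b => ?_)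
    change (Submodule.Quotient.mk (m ⊗ₜ[ℤ] ((0 : Sᵐᵒᵖ) • b)) : RTensor R M B) = 0
    rw [zero_smul, TensorProduct.tmul_zero, Submodule.Quotient.mk_zero]
  map_add' s s' := by
    refine Submodule.linearMap_qext _ (TensorProduct.ext' fun m b => ?_)
    change (Submodule.Quotient.mk (m ⊗ₜ[ℤ] ((s + s') • b)) : RTensor R M B) =
      Submodule.Quotient.mk (m ⊗ₜ[ℤ] (s • b)) + Submodule.Quotient.mk (m ⊗ₜ[ℤ] (s' • b))
    rw [add_smul, TensorProduct.tmul_add, Submodule.Quotient.mk_add]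

/-- The right `S`-module structure on `M ⊗_R B` for an `(R,S)`-bimodule `B`. -/
noncomputable instance instModS : Module Sᵐᵒᵖ (RTensor R M B) :=
  Module.compHom _ (rho R S M B)

theorem smul_mk (s : Sᵐᵒᵖ) (y : TensorProduct ℤ M B) :
    s • (Submodule.Quotient.mk y : RTensor R M B) =
      Submodule.Quotient.mk
        (LinearMap.lTensor M ((sEndo R S (B := B) s).toAddMonoidHom.toIntLinearMap) y) :=
  rfl

@[simp] theorem smul_rtmul (s : Sᵐᵒᵖ) (m : M) (b : B) :
    s • rtmul R M B m b = rtmul R M B m (s • b) :=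
  rfl

end SAction

end Tensor

end MTM
namespace MTM

open MulOpposite TensorProduct

variable (R : Type u) [Ring R] (S : Type u) [Ring S]

section TensorMaps

variable (M : Type u) [AddCommGroup M] [Module Rᵐᵒᵖ M]
variable {M' : Type u} [AddCommGroup M'] [Module Rᵐᵒᵖ M']
variable (B : Type u) [AddCommGroup B] [Module R B] [Module Sᵐᵒᵖ B] [SMulCommClass R Sᵐᵒᵖ B]
variable {B' : Type u} [AddCommGroup B'] [Module R B'] [Module Sᵐᵒᵖ B'] [SMulCommClass R Sᵐᵒᵖ B']

/-- Functoriality of `M ⊗_R -` in maps of `(R,S)`-bimodules, as a map of right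
`S`-modules. -/
noncomputable def mapBS (g : B →ₗ[R] B') (hg : ∀ (s : Sᵐᵒᵖ) (b : B), g (s • b) = s • g b) :
    RTensor R M B →ₗ[Sᵐᵒᵖ] RTensor R M B' where
  toFun := mapB R g
  map_add' := map_add _
  map_smul' s x := by
    obtain ⟨y, rfl⟩ := Submodule.Quotient.mk_surjective _ x
    show mapB R g (s • Submodule.Quotient.mk y) = s • mapB R g (Submodule.Quotient.mk y)
    rw [smul_mk R S, mapB_mk, mapB_mk, smul_mk R S,
      ← LinearMap.comp_apply, ← LinearMap.comp_apply, ← LinearMap.lTensor_comp,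
      ← LinearMap.lTensor_comp]
    have hcomp : g.toAddMonoidHom.toIntLinearMap ∘ₗ
          (sEndo R S (B := B) s).toAddMonoidHom.toIntLinearMap =
        (sEndo R S (B := B') s).toAddMonoidHom.toIntLinearMap ∘ₗ
          g.toAddMonoidHom.toIntLinearMap := by
      ext b
      exact hg s b
    rw [hcomp]

/-- Functoriality of `- ⊗_R B` in maps of right `R`-modules, as a map of right
`S`-modules. -/
noncomputable def mapMS (h : M →ₗ[Rᵐᵒᵖ] M') :
    RTensor R M B →ₗ[Sᵐᵒᵖ] RTensor R M' B where
  toFun := mapM R h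
  map_add' := map_add _
  map_smul' s x := by
    obtain ⟨y, rfl⟩ := Submodule.Quotient.mk_surjective _ x
    show mapM R h (s • Submodule.Quotient.mk y) = s • mapM R h (Submodule.Quotient.mk y)
    rw [smul_mk R S, mapM_mk, mapM_mk, smul_mk R S,
      ← LinearMap.comp_apply, ← LinearMap.comp_apply, LinearMap.rTensor_comp_lTensor,
      LinearMap.lTensor_comp_rTensor]

end TensorMaps

section Canonical

variable (M : Type u) [AddCommGroup M] [Module Rᵐᵒᵖ M]

/-- The canonical map `M ⊗_R (∏ᵢ Lᵢ) → ∏ᵢ (M ⊗_R Lᵢ)` for a family of left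
`R`-modules, as a `ℤ`-linear map. -/
noncomputable def canonicalL {ι' : Type u} (L : ι' → Type u)
    [∀ i, AddCommGroup (L i)] [∀ i, Module R (L i)] :
    RTensor R M (∀ i, L i) →ₗ[ℤ] ∀ i, RTensor R M (L i) :=
  LinearMap.pi fun i => mapB R (LinearMap.proj i)

/-- The canonical map `M ⊗_R (∏ᵢ Lᵢ) → ∏ᵢ (M ⊗_R Lᵢ)` for a family of
`(R,S)`-bimodules, as a map of right `S`-modules. -/
noncomputable def canonicalB {ι' : Type u} (L : ι' → Type u)
    [∀ i, AddCommGroup (L i)] [∀ i, Module R (L i)] [∀ i, Module Sᵐᵒᵖ (L i)]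
    [∀ i, SMulCommClass R Sᵐᵒᵖ (L i)] :
    RTensor R M (∀ i, L i) →ₗ[Sᵐᵒᵖ] ∀ i, RTensor R M (L i) :=
  LinearMap.pi fun i => mapBS R S M (∀ j, L j) (LinearMap.proj i) (fun _ _ => rfl)

/-- The canonical map `(∏_λ M_λ) ⊗_R B → ∏_λ (M_λ ⊗_R B)` for a family of right
`R`-modules and an `(R,S)`-bimodule `B`, as a map of right `S`-modules. -/
noncomputable def canonicalM {ι' : Type u} (N : ι' → Type u)
    [∀ i, AddCommGroup (N i)] [∀ i, Module Rᵐᵒᵖ (N i)]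
    (B : Type u) [AddCommGroup B] [Module R B] [Module Sᵐᵒᵖ B] [SMulCommClass R Sᵐᵒᵖ B] :
    RTensor R (∀ i, N i) B →ₗ[Sᵐᵒᵖ] ∀ i, RTensor R (N i) B :=
  LinearMap.pi fun i => mapMS R S (∀ j, N j) B (LinearMap.proj i)

end Canonical

section UnitMap

variable (M : Type u) [AddCommGroup M] [Module Rᵐᵒᵖ M]
variable (B : Type u) [AddCommGroup B] [Module R B] [Module Rᵐᵒᵖ B] [SMulCommClass R Rᵐᵒᵖ B]

/-- For an `(R,R)`-bimodule `B` and a central-ish element `e` (e.g. `1 ∈ S` for a ring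
extension `R → S`), the canonical map `M → M ⊗_R B`, `a ↦ a ⊗ e`, as a map of right
`R`-modules. -/
noncomputable def unitMap (e : B) (he : ∀ r : R, r • e = op r • e) :
    M →ₗ[Rᵐᵒᵖ] RTensor R M B where
  toFun m := rtmul R M B m e
  map_add' m m' := by
    show Submodule.Quotient.mk _ = Submodule.Quotient.mk _ + Submodule.Quotient.mk _
    rw [← Submodule.Quotient.mk_add, TensorProduct.add_tmul]
  map_smul' r m := by
    show rtmul R M B (r • m) e = r • rtmul R M B m e
    rw [smul_rtmul]
    rw [rtmul, rtmul, Submodule.Quotient.eq]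
    have : (r • e : B) = (r.unop : R) • e := (he r.unop).symm
    rw [this]
    exact Submodule.subset_span ⟨r.unop, m, e, by rw [op_unop]⟩

end UnitMap

end MTM
namespace MTM

open MulOpposite

variable (R : Type u) [Ring R] (S : Type u) [Ring S]

/-! ### pp formulas for `(R,S)`-bimodules -/

/-- The action of a formal coefficient `∑ (r,s)` of the bimodule language on an
element of an `(R,S)`-bimodule: `b ↦ ∑ r b s`. -/
def cAct (c : List (R × S)) {B : Type v} [AddCommGroup B] [Module R B] [Module Sᵐᵒᵖ B]
    (b : B) : B :=
  (c.map fun p => p.1 • (op p.2 • b)).sum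

/-- A pp formula for `(R,S)`-bimodules (equivalently, for right `Rᵒᵖ ⊗ S`-modules):
coefficients are formal sums of pairs `(r,s)`, acting by `x ↦ ∑ r x s`. -/
structure BiPP (ι : Type) : Type (max u 1) where
  κ : Type
  ε : Type
  [fintκ : Fintype κ]
  [fintε : Fintype ε]
  A : Matrix ι ε (List (R × S))
  B : Matrix κ ε (List (R × S))

attribute [instance] BiPP.fintκ BiPP.fintε

variable {R S} in
/-- Solution set of a bimodule pp formula in an `(R,S)`-bimodule. -/
def BiPP.sol {ι : Type} [Fintype ι] (θ : BiPP R S ι) (Bm : Type v) [AddCommGroup Bm]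
    [Module R Bm] [Module Sᵐᵒᵖ Bm] : Set (ι → Bm) :=
  { a | ∃ b : θ.κ → Bm, ∀ j : θ.ε,
      (∑ i, cAct R S (θ.A i j) (a i)) + (∑ k, cAct R S (θ.B k j) (b k)) = 0 }

/-- A bundled `(R,S)`-bimodule. -/
structure Bimod : Type (u + 1) where
  carrier : Type u
  [addCommGroup : AddCommGroup carrier]
  [modR : Module R carrier]
  [modSop : Module Sᵐᵒᵖ carrier]
  [smulComm : SMulCommClass R Sᵐᵒᵖ carrier]

attribute [instance] Bimod.addCommGroup Bimod.modR Bimod.modSop Bimod.smulComm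

instance : CoeSort (Bimod R S) (Type u) := ⟨Bimod.carrier⟩

/-- Bundling an `(R,S)`-bimodule. -/
def Bimod.of (B : Type u) [AddCommGroup B] [Module R B] [Module Sᵐᵒᵖ B]
    [SMulCommClass R Sᵐᵒᵖ B] : Bimod R S :=
  ⟨B⟩

/-- A pp-pair for `(R,S)`-bimodules. -/
structure BiPPPair : Type (max u 1) where
  n : ℕ
  num : BiPP R S (Fin n)
  den : BiPP R S (Fin n)
  le : ∀ Bm : Bimod R S, den.sol Bm ⊆ num.sol Bm

variable {R S} in
/-- Closedness of a bimodule pp-pair on a bimodule. -/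
def BiPPPair.ClosedOn (p : BiPPPair R S) (Bm : Type v) [AddCommGroup Bm] [Module R Bm]
    [Module Sᵐᵒᵖ Bm] : Prop :=
  p.num.sol Bm = p.den.sol Bm

/-- The class of bimodules defined by closure of a set of bimodule pp-pairs. -/
def biDefinedBy (Φ : Set (BiPPPair R S)) : Set (Bimod R S) :=
  { Bm | ∀ p ∈ Φ, p.ClosedOn Bm }

/-- Definable subcategories of the category `R-Mod-S` of `(R,S)`-bimodules. -/
def IsDefinableBi (𝓑 : Set (Bimod R S)) : Prop :=
  ∃ Φ : Set (BiPPPair R S), 𝓑 = biDefinedBy R S Φ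

/-- The smallest definable subcategory of `R-Mod-S` containing `X`. -/
def genBi (X : Set (Bimod R S)) : Set (Bimod R S) :=
  ⋂₀ { 𝓑 | IsDefinableBi R S 𝓑 ∧ X ⊆ 𝓑 }

/-- `θ ≤_𝓑 θ'` for a class `𝓑` of bimodules. -/
def BiLeOn (𝓑 : Set (Bimod R S)) {ι : Type} [Fintype ι] (θ θ' : BiPP R S ι) : Prop :=
  ∀ Bm ∈ 𝓑, θ.sol Bm ⊆ θ'.sol Bm

/-! ### Partitioned tuples, `(σ:φ)` and atomicity with respect to a bimodule -/

/-- The index type of a `ν`-partitioned tuple: `k` blocks, the `t`-th of size `ν t`. -/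
abbrev PIdx {k : ℕ} (ν : Fin k → ℕ) : Type := (t : Fin k) × Fin (ν t)

/-- The tensor product of matching partitioned tuples: the `k`-tuple
`(ā₁ ⊗ b̄₁, …, ā_k ⊗ b̄_k)` where `ā_t ⊗ b̄_t = ∑_j a_{tj} ⊗ b_{tj}`. -/
noncomputable def ptensor (M : Type u) [AddCommGroup M] [Module Rᵐᵒᵖ M] (B : Type u)
    [AddCommGroup B] [Module R B] {k : ℕ} {ν : Fin k → ℕ}
    (a : PIdx ν → M) (b : PIdx ν → B) : Fin k → RTensor R M B :=
  fun t => ∑ j : Fin (ν t), rtmul R M B (a ⟨t, j⟩) (b ⟨t, j⟩)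

variable {R}

/-- The pp-type of `ā` in `M` is generated by `φ`: `pp^M(ā) = {ψ : φ ≤ ψ}`. -/
def GeneratedBy {ι : Type} [Fintype ι] {M : Type u} [AddCommGroup M] [Module Rᵐᵒᵖ M]
    (a : ι → M) (φ : PP R ι) : Prop :=
  ∀ ψ : PP R ι, a ∈ ψ.sol M ↔ φ.Le ψ

/-- The pp-type of `ā` in `M` is `𝒳`-generated by `φ`: `pp^M(ā) = {ψ : φ ≤_𝒳 ψ}`. -/
def GeneratedByOn (𝒳 : Set (ModuleCat.{u} Rᵐᵒᵖ)) {ι : Type} [Fintype ι] {M : Type u}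
    [AddCommGroup M] [Module Rᵐᵒᵖ M] (a : ι → M) (φ : PP R ι) : Prop :=
  ∀ ψ : PP R ι, a ∈ ψ.sol M ↔ LeOn R 𝒳 φ ψ

variable (R)

/-- An assignment `(σ, φ) ↦ (σ:φ)` of a bimodule pp formula to each pp formula `σ`
for right `S`-modules (in `k` free variables) and each matching partitioned pp
formula `φ` for right `R`-modules. -/
def ColonAsgn : Type (max u 1) :=
  ∀ (k : ℕ) (ν : Fin k → ℕ), PP S (Fin k) → PP R (PIdx ν) → BiPP R S (PIdx ν)

/-- The characterizing property of the assignment `(σ, φ) ↦ (σ:φ)`: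
(1) if `ā ∈ φ(M)` and `b̄ ∈ (σ:φ)(B)` then `ā ⊗ b̄ ∈ σ(M ⊗_R B)`;
(2) if `pp^M(ā)` is generated by `φ` then `ā ⊗ b̄ ∈ σ(M ⊗_R B)` iff `b̄ ∈ (σ:φ)(B)`. -/
def ColonSpec (c : ColonAsgn R S) : Prop :=
  ∀ (k : ℕ) (ν : Fin k → ℕ) (σ : PP S (Fin k)) (φ : PP R (PIdx ν))
    (M : Type u) [AddCommGroup M] [Module Rᵐᵒᵖ M]
    (Bm : Type u) [AddCommGroup Bm] [Module R Bm] [Module Sᵐᵒᵖ Bm]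
    [SMulCommClass R Sᵐᵒᵖ Bm] (a : PIdx ν → M) (b : PIdx ν → Bm),
    (a ∈ φ.sol M → b ∈ (c k ν σ φ).sol Bm →
      ptensor R M Bm a b ∈ σ.sol (RTensor R M Bm)) ∧
    (GeneratedBy a φ →
      (ptensor R M Bm a b ∈ σ.sol (RTensor R M Bm) ↔ b ∈ (c k ν σ φ).sol Bm))

/-- `M` is atomic with respect to the `(R,S)`-bimodule `B` (relative to a choice `c`
of the assignment `(σ,φ) ↦ (σ:φ)`): for every partitioned finite tuple `ā` from `M`
and every pp formula `σ` for right `S`-modules there is `φ ∈ pp^M(ā)` such that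
`(σ:φ)(B)` is the largest among the `(σ:ψ)(B)` with `ψ ∈ pp^M(ā)`. -/
def AtomicWrt (c : ColonAsgn R S) (M : Type u) [AddCommGroup M] [Module Rᵐᵒᵖ M]
    (Bm : Type u) [AddCommGroup Bm] [Module R Bm] [Module Sᵐᵒᵖ Bm] : Prop :=
  ∀ (k : ℕ) (ν : Fin k → ℕ) (σ : PP S (Fin k)) (a : PIdx ν → M),
    ∃ φ : PP R (PIdx ν), a ∈ φ.sol M ∧
      ∀ ψ : PP R (PIdx ν), a ∈ ψ.sol M → (c k ν σ ψ).sol Bm ⊆ (c k ν σ φ).sol Bm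

/-! ### Mittag-Leffler modules, atomic modules -/

/-- `M` is Mittag-Leffler: the canonical map `M ⊗_R ∏ᵢ Lᵢ → ∏ᵢ (M ⊗_R Lᵢ)` is
injective for every family of left `R`-modules. -/
def IsML (M : Type u) [AddCommGroup M] [Module Rᵐᵒᵖ M] : Prop :=
  ∀ (ι' : Type u) (L : ι' → Type u) (_ : ∀ i, AddCommGroup (L i))
    (_ : ∀ i, Module R (L i)), Function.Injective (canonicalL R M L)

/-- `M` is `𝒳`-Mittag-Leffler for a class `𝒳` of left `R`-modules. -/
def IsMLOn (𝒳 : Set (ModuleCat.{u} R)) (M : Type u) [AddCommGroup M] [Module Rᵐᵒᵖ M] :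
    Prop :=
  ∀ (ι' : Type u) (L : ι' → Type u) (_ : ∀ i, AddCommGroup (L i))
    (_ : ∀ i, Module R (L i)),
    (∀ i, ModuleCat.of R (L i) ∈ 𝒳) → Function.Injective (canonicalL R M L)

/-- `M` is `D`-atomic: the pp-type of every finite tuple from `M` is `D`-finitely
generated. -/
def AtomicOn (D : Set (ModuleCat.{u} Rᵐᵒᵖ)) (M : Type u) [AddCommGroup M]
    [Module Rᵐᵒᵖ M] : Prop :=
  ∀ (n : ℕ) (a : Fin n → M), ∃ φ : PP R (Fin n), GeneratedByOn D a φ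

/-- The elementary dual `⟨K⟩ᵈ ⊆ Mod-R` of the definable subcategory of `R-Mod`
generated by a class `K` of left `R`-modules: it is defined by the pp-pairs for right
`R`-modules whose (elementary) dual pp-pair is closed on `⟨K⟩`. -/
def dualCat (K : Set (ModuleCat.{u} R)) : Set (ModuleCat.{u} Rᵐᵒᵖ) :=
  definedBy R { p : PPPair R |
    ∀ L ∈ genL R K, (p.num.dual).solL L = (p.den.dual).solL L }

/-! ### Pure projectivity, finite genericity, pure cogenerators -/

/-- A left `R`-module is pure-projective if it is a direct summand of a direct sum of
finitely presented left `R`-modules. -/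
def IsPureProjL (B : Type u) [AddCommGroup B] [Module R B] : Prop :=
  ∃ (ι : Type u) (_ : DecidableEq ι) (F : ι → Type u) (_ : ∀ i, AddCommGroup (F i))
    (_ : ∀ i, Module R (F i)) (_ : ∀ i, Module.FinitePresentation R (F i))
    (e : B →ₗ[R] DirectSum ι F) (p : DirectSum ι F →ₗ[R] B), p.comp e = LinearMap.id

/-- `M` is finitely generic in the definable subcategory `D`: for every pp formula
`φ` there is a tuple from `M` whose pp-type is `D`-generated by `φ`. -/
def FinGeneric (D : Set (ModuleCat.{u} Rᵐᵒᵖ)) (M : Type u) [AddCommGroup M]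
    [Module Rᵐᵒᵖ M] : Prop :=
  ModuleCat.of Rᵐᵒᵖ M ∈ D ∧
    ∀ (ι : Type) (_ : Fintype ι) (φ : PP R ι), ∃ a : ι → M, GeneratedByOn D a φ

variable {R S}

/-- The pp-type of a tuple in a bimodule is `𝓑`-generated by `θ`. -/
def BiGeneratedByOn (𝓑 : Set (Bimod R S)) {ι : Type} [Fintype ι] {Bm : Type u}
    [AddCommGroup Bm] [Module R Bm] [Module Sᵐᵒᵖ Bm] (b : ι → Bm) (θ : BiPP R S ι) :
    Prop :=
  ∀ θ' : BiPP R S ι, b ∈ θ'.sol Bm ↔ BiLeOn R S 𝓑 θ θ'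

variable (R S)

/-- A bimodule is finitely generic in a definable subcategory `𝓑` of `R-Mod-S`. -/
def FinGenericBi (𝓑 : Set (Bimod R S)) (Bm : Type u) [AddCommGroup Bm] [Module R Bm]
    [Module Sᵐᵒᵖ Bm] [SMulCommClass R Sᵐᵒᵖ Bm] : Prop :=
  Bimod.of R S Bm ∈ 𝓑 ∧
    ∀ (ι : Type) (_ : Fintype ι) (θ : BiPP R S ι), ∃ b : ι → Bm, BiGeneratedByOn 𝓑 b θ

end MTM
namespace MTM

open MulOpposite

variable (R : Type u) [Ring R] (S : Type u) [Ring S]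

/-! ### Tensor extension of definable subcategories -/

section TensorExt

variable (B : Type u) [AddCommGroup B] [Module R B] [Module Sᵐᵒᵖ B] [SMulCommClass R Sᵐᵒᵖ B]

/-- The set `{M ⊗_R B : M ∈ D}` of right `S`-modules. -/
noncomputable def tensorExtSet (D : Set (ModuleCat.{u} Rᵐᵒᵖ)) : Set (ModuleCat.{u} Sᵐᵒᵖ) :=
  { N | ∃ M ∈ D, N = ModuleCat.of Sᵐᵒᵖ (RTensor R M B) }

/-- The tensor extension `D ⊗_R B`: the definable subcategory of `Mod-S` generated by
`{M ⊗_R B : M ∈ D}`. -/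
noncomputable def tensorExt (D : Set (ModuleCat.{u} Rᵐᵒᵖ)) : Set (ModuleCat.{u} Sᵐᵒᵖ) :=
  gen S (tensorExtSet R S B D)

end TensorExt

/-- `D ⊗ 𝓑` for a definable subcategory `D` of `Mod-R` and a definable subcategory
`𝓑` of `R-Mod-S`: the definable subcategory of `Mod-S` generated by the modules
`M ⊗_R B` with `M ∈ D`, `B ∈ 𝓑`. -/
noncomputable def tensorProd (D : Set (ModuleCat.{u} Rᵐᵒᵖ)) (𝓑 : Set (Bimod R S)) :
    Set (ModuleCat.{u} Sᵐᵒᵖ) :=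
  gen S { N | ∃ M ∈ D, ∃ Bm ∈ 𝓑, N = ModuleCat.of Sᵐᵒᵖ (RTensor R M Bm) }

/-! ### Directed colimits -/

open CategoryTheory CategoryTheory.Limits in
/-- `M` is a directed colimit of modules satisfying `P`. -/
def IsDirectedColimitOf (M : ModuleCat.{u} Rᵐᵒᵖ) (P : ModuleCat.{u} Rᵐᵒᵖ → Prop) :
    Prop :=
  ∃ (J : Type u) (_ : Preorder J) (_ : IsDirected J (· ≤ ·)) (_ : Nonempty J)
    (F : J ⥤ ModuleCat.{u} Rᵐᵒᵖ) (c : Cocone F),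
    Nonempty (IsColimit c) ∧ Nonempty (c.pt ≅ M) ∧ ∀ j, P (F.obj j)

/-! ### Elementary embeddings of rings -/

open FirstOrder in
/-- `f : R →+* S` is an elementary embedding of rings: there is a model-theoretic
elementary embedding (for the first-order language of rings) whose underlying
function is `f`.  (Elementary embeddings preserve and reflect all first-order
formulas at all tuples of parameters from `R`.) -/
def IsElemRingEmb (f : R →+* S) : Prop :=
  letI := FirstOrder.Ring.compatibleRingOfRing R
  letI := FirstOrder.Ring.compatibleRingOfRing S
  ∃ F : Language.ring.ElementaryEmbedding R S, ∀ r : R, F r = f r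

/-! ### Bimodule structures along a ring homomorphism -/

section AlongHom

variable (f : R →+* S)

/-- The left `R`-module structure on `S` along `f`. -/
def modLeft : Module R S := Module.compHom S f

/-- The right `R`-module structure on `S` along `f`. -/
def modRight : Module Rᵐᵒᵖ S := Module.compHom S (RingHom.op f)

/-- `S` is an `(R,S)`-bimodule along `f`. -/
theorem smulComm_RS :
    letI := modLeft R S f
    SMulCommClass R Sᵐᵒᵖ S := by
  letI := modLeft R S f
  constructor
  intro r s x
  show f r * (x * s.unop) = (f r * x) * s.unop
  rw [mul_assoc]

/-- `S` is an `(R,R)`-bimodule along `f`. -/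
theorem smulComm_RR :
    letI := modLeft R S f
    letI := modRight R S f
    SMulCommClass R Rᵐᵒᵖ S := by
  letI := modLeft R S f
  letI := modRight R S f
  constructor
  intro r r' x
  show f r * (x * f r'.unop) = (f r * x) * f r'.unop
  rw [mul_assoc]

end AlongHom

end MTM
namespace MTM

open MulOpposite

variable (R : Type u) [Ring R] (S : Type u) [Ring S]

/-- A pure embedding of `(R,S)`-bimodules: an injective map of bimodules which
reflects solution sets of bimodule pp formulas. -/
def IsBiPureEmb {B B' : Type u} [AddCommGroup B] [Module R B] [Module Sᵐᵒᵖ B]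
    [AddCommGroup B'] [Module R B'] [Module Sᵐᵒᵖ B']
    (g : B →ₗ[R] B') (_ : ∀ (s : Sᵐᵒᵖ) (b : B), g (s • b) = s • g b) : Prop :=
  Function.Injective g ∧
    ∀ (ι : Type) (_ : Fintype ι) (θ : BiPP R S ι) (a : ι → B),
      (fun i => g (a i)) ∈ θ.sol B' → a ∈ θ.sol B

/-- The ring `S`, viewed as an `(R,S)`-bimodule (and as an `(R,R)`-bimodule) along a
ring homomorphism `f : R →+* S`. -/
def SAlong (f : R →+* S) : Type u := S

namespace SAlong

variable (f : R →+* S)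

instance : AddCommGroup (SAlong R S f) := inferInstanceAs (AddCommGroup S)
instance : Module R (SAlong R S f) := Module.compHom S f
instance : Module Sᵐᵒᵖ (SAlong R S f) := inferInstanceAs (Module Sᵐᵒᵖ S)
instance : Module Rᵐᵒᵖ (SAlong R S f) := Module.compHom S (RingHom.op f)

instance : SMulCommClass R Sᵐᵒᵖ (SAlong R S f) := smulComm_RS R S f

instance : SMulCommClass R Rᵐᵒᵖ (SAlong R S f) := smulComm_RR R S f

/-- The element `1 ∈ S`. -/
def one : SAlong R S f := (1 : S)

theorem smul_one : ∀ r : R, r • (one R S f) = op r • (one R S f) := by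
  intro r
  show f r * (1 : S) = (1 : S) * f r
  rw [mul_one, one_mul]

end SAlong

end MTM

/-!
Write the pp formula as `∃ ȳ (x̄ A + ȳ B = 0)`. A tuple of `M ⊗_R W`, packed into
`M ⊗_R W^ι`, satisfies it iff its image under `M ⊗ A` lies in the image of `M ⊗ B`.
For `W = ∏ L_λ` the map `B` is, up to reindexing, the product of the maps `B` on the `L_λ`;
so it suffices that an element of `M ⊗_R ∏ V_λ` whose components lie in the images of the
`M ⊗ g_λ` lies in the image of `M ⊗ ∏ g_λ`. By right exactness of `M ⊗_R -` this says
that an element of `M ⊗_R ∏ Q_λ` (`Q_λ` the cokernel of `g_λ`) with zero components is zero,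
which is the Mittag-Leffler property.
-/

def LinearEquiv.piComm (R : Type*) [Semiring R] {α β : Type*} (φ : α → β → Type*)
    [∀ a b, AddCommMonoid (φ a b)] [∀ a b, Module R (φ a b)] :
    (∀ a b, φ a b) ≃ₗ[R] ∀ b a, φ a b :=
  { Equiv.piComm φ with map_add' := fun _ _ => rfl, map_smul' := fun _ _ => rfl }

namespace MTM

open MulOpposite

theorem PP.sol_map {R : Type u} [Ring R] {ι : Type} [Fintype ι] {N N' : Type v}
    [AddCommGroup N] [Module Rᵐᵒᵖ N] [AddCommGroup N'] [Module Rᵐᵒᵖ N']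
    (f : N →ₗ[Rᵐᵒᵖ] N') {φ : PP R ι} {a : ι → N} (ha : a ∈ φ.sol N) :
    (fun i => f (a i)) ∈ φ.sol N' := by
  obtain ⟨b, hb⟩ := ha
  refine ⟨fun k => f (b k), fun j => ?_⟩
  simpa only [map_add, map_sum, map_smul, map_zero] using congrArg f (hb j)

section Functoriality

variable (R : Type u) [Ring R] {M : Type u} [AddCommGroup M] [Module Rᵐᵒᵖ M]
variable {B B' B'' : Type u} [AddCommGroup B] [Module R B] [AddCommGroup B'] [Module R B']
  [AddCommGroup B''] [Module R B'']

theorem RTensor.hom_ext {N : Type*} [AddCommGroup N] {f f' : RTensor R M B →ₗ[ℤ] N}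
    (h : ∀ m b, f (rtmul R M B m b) = f' (rtmul R M B m b)) : f = f' :=
  Submodule.linearMap_qext _ (TensorProduct.ext' h)

theorem mapB_comp (g : B' →ₗ[R] B'') (g' : B →ₗ[R] B') :
    mapB R (M := M) (g ∘ₗ g') = mapB R g ∘ₗ mapB R g' :=
  RTensor.hom_ext R fun _ _ => rfl

theorem mapB_comp_apply (g : B' →ₗ[R] B'') (g' : B →ₗ[R] B') (x : RTensor R M B) :
    mapB R (g ∘ₗ g') x = mapB R g (mapB R g' x) :=
  LinearMap.congr_fun (mapB_comp R g g') x

theorem mapB_id : mapB R (M := M) (LinearMap.id : B →ₗ[R] B) = LinearMap.id :=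
  RTensor.hom_ext R fun _ _ => rfl

theorem mapB_add (g g' : B →ₗ[R] B') :
    mapB R (M := M) (g + g') = mapB R g + mapB R g' :=
  RTensor.hom_ext R fun m b => by
    simp only [LinearMap.add_apply]
    exact congrArg (Submodule.Quotient.mk (p := tensorRel R M B')) (TensorProduct.tmul_add m _ _)

theorem mapB_sum {τ : Type*} (s : Finset τ) (f : τ → B →ₗ[R] B') :
    mapB R (M := M) (∑ i ∈ s, f i) = ∑ i ∈ s, mapB R (f i) :=
  map_sum (AddMonoidHom.mk' (mapB R) (mapB_add R)) f s

theorem mapB_zero : mapB R (M := M) (0 : B →ₗ[R] B') = 0 :=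
  (AddMonoidHom.mk' (mapB R (M := M)) (mapB_add R)).map_zero

end Functoriality

section Tuples

variable (R : Type u) [Ring R] {M : Type u} [AddCommGroup M] [Module Rᵐᵒᵖ M]
variable {B : Type u} [AddCommGroup B] [Module R B] {τ : Type} [Fintype τ] [DecidableEq τ]

noncomputable def piTensor (a : τ → RTensor R M B) : RTensor R M (τ → B) :=
  ∑ j, mapB R (LinearMap.single R (fun _ => B) j) (a j)

theorem mapB_proj_piTensor (a : τ → RTensor R M B) (i : τ) :
    mapB R (LinearMap.proj i) (piTensor R a) = a i := by
  simp only [piTensor, map_sum, ← mapB_comp_apply]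
  rw [Finset.sum_eq_single i (fun j _ hji => by
      rw [LinearMap.proj_comp_single_ne R _ i j hji.symm, mapB_zero, LinearMap.zero_apply])
    (by simp), LinearMap.proj_comp_single_same, mapB_id, LinearMap.id_apply]

theorem piTensor_mapB_proj (x : RTensor R M (τ → B)) :
    piTensor R (fun j => mapB R (LinearMap.proj j) x) = x := by
  have hid : ∑ j, LinearMap.single R (fun _ => B) j ∘ₗ LinearMap.proj j =
      (LinearMap.id : (τ → B) →ₗ[R] τ → B) :=
    LinearMap.ext fun w => by simp [Finset.univ_sum_single w]
  simp only [piTensor, ← mapB_comp_apply, ← LinearMap.sum_apply, ← mapB_sum, hid, mapB_id,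
    LinearMap.id_apply]

theorem RTensor.pi_ext {x y : RTensor R M (τ → B)}
    (h : ∀ j, mapB R (LinearMap.proj j) x = mapB R (LinearMap.proj j) y) : x = y := by
  rw [← piTensor_mapB_proj R x, ← piTensor_mapB_proj R y, funext h]

end Tuples

section RightVecMul

variable (R : Type u) [Ring R] (S : Type u) [Ring S] {M : Type u} [AddCommGroup M]
  [Module Rᵐᵒᵖ M] {W : Type u} [AddCommGroup W] [Module R W] [Module Sᵐᵒᵖ W]
  [SMulCommClass R Sᵐᵒᵖ W] {τ ε : Type} [Fintype τ]

def rightVecMul (C : Matrix τ ε S) : (τ → W) →ₗ[R] (ε → W) :=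
  LinearMap.pi fun j => ∑ t, sEndo R S (op (C t j)) ∘ₗ LinearMap.proj t

theorem rightVecMul_apply (C : Matrix τ ε S) (z : τ → W) (j : ε) :
    rightVecMul R S C z j = ∑ t, op (C t j) • z t := by
  simp only [rightVecMul, LinearMap.pi_apply, LinearMap.sum_apply, LinearMap.comp_apply,
    LinearMap.proj_apply]
  rfl

theorem mapB_proj_rightVecMul (C : Matrix τ ε S) (x : RTensor R M (τ → W)) (j : ε) :
    mapB R (LinearMap.proj j) (mapB R (rightVecMul R S C) x) =
      ∑ t, op (C t j) • mapB R (LinearMap.proj t) x := by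
  rw [← mapB_comp_apply, rightVecMul, LinearMap.proj_pi, mapB_sum, LinearMap.sum_apply]
  simp only [mapB_comp_apply]
  rfl

theorem mapB_proj_mem_sol_iff {ι : Type} [Fintype ι] (σ : PP S ι)
    (x : RTensor R M (ι → W)) :
    (fun i => mapB R (LinearMap.proj i) x) ∈ σ.sol (RTensor R M W) ↔
      mapB R (rightVecMul R S σ.A) x ∈ LinearMap.range (mapB R (rightVecMul R S σ.B)) := by
  classical
  constructor
  · rintro ⟨b, hb⟩
    refine ⟨piTensor R (-b), RTensor.pi_ext R fun j => ?_⟩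
    simp only [mapB_proj_rightVecMul, mapB_proj_piTensor, Pi.neg_apply, smul_neg,
      Finset.sum_neg_distrib]
    exact neg_eq_of_add_eq_zero_left (hb j)
  · rintro ⟨d, hd⟩
    refine ⟨fun k => -mapB R (LinearMap.proj k) d, fun j => ?_⟩
    simp only [smul_neg, Finset.sum_neg_distrib, ← mapB_proj_rightVecMul, hd, add_neg_cancel]

end RightVecMul

section RightExact

variable (R : Type u) [Ring R] {M : Type u} [AddCommGroup M] [Module Rᵐᵒᵖ M]
variable {U V Q : Type u} [AddCommGroup U] [Module R U] [AddCommGroup V] [Module R V]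
  [AddCommGroup Q] [Module R Q]

theorem tensorRel_le_map_of_surjective {q : V →ₗ[R] Q} (hq : Function.Surjective q) :
    tensorRel R M Q ≤
      (tensorRel R M V).map (LinearMap.lTensor M q.toAddMonoidHom.toIntLinearMap) := by
  refine Submodule.span_le.mpr ?_
  rintro _ ⟨r, m, b, rfl⟩
  obtain ⟨v, rfl⟩ := hq b
  refine ⟨(op r • m) ⊗ₜ[ℤ] v - m ⊗ₜ[ℤ] (r • v), Submodule.subset_span ⟨r, m, v, rfl⟩, ?_⟩
  simp [q.map_smul]

theorem mem_range_mapB_of_exact {g : U →ₗ[R] V} {q : V →ₗ[R] Q} (hexact : Function.Exact g q)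
    (hq : Function.Surjective q) {x : RTensor R M V} (hx : mapB R q x = 0) :
    x ∈ LinearMap.range (mapB R g) := by
  obtain ⟨y, rfl⟩ := Submodule.Quotient.mk_surjective _ x
  rw [mapB_mk, Submodule.Quotient.mk_eq_zero] at hx
  obtain ⟨y', hy'rel, hy'⟩ := tensorRel_le_map_of_surjective R hq hx
  have hker : LinearMap.lTensor M q.toAddMonoidHom.toIntLinearMap (y - y') = 0 := by
    rw [map_sub, hy', sub_self]
  obtain ⟨z, hz⟩ := (lTensor_exact M (f := g.toAddMonoidHom.toIntLinearMap)
    (g := q.toAddMonoidHom.toIntLinearMap) hexact hq (y - y')).mp hker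
  refine ⟨Submodule.Quotient.mk z, ?_⟩
  rw [mapB_mk, hz, Submodule.Quotient.eq, sub_sub_cancel_left]
  exact neg_mem hy'rel

variable {U' V' : Type u} [AddCommGroup U'] [Module R U'] [AddCommGroup V'] [Module R V']

theorem mem_range_mapB_of_comp_eq {g : U →ₗ[R] V} {g' : U' →ₗ[R] V'} (e : U ≃ₗ[R] U')
    (e' : V ≃ₗ[R] V') (h : e'.toLinearMap ∘ₗ g = g' ∘ₗ e.toLinearMap) {x : RTensor R M V}
    (hx : mapB R e'.toLinearMap x ∈ LinearMap.range (mapB R g')) :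
    x ∈ LinearMap.range (mapB R g) := by
  obtain ⟨y, hy⟩ := hx
  have hg : g ∘ₗ e.symm.toLinearMap = e'.symm.toLinearMap ∘ₗ g' :=
    LinearMap.ext fun u => e'.injective (by simpa using LinearMap.congr_fun h (e.symm u))
  refine ⟨mapB R e.symm.toLinearMap y, ?_⟩
  rw [← mapB_comp_apply, hg, mapB_comp_apply, hy, ← mapB_comp_apply, LinearEquiv.symm_comp,
    mapB_id, LinearMap.id_apply]

end RightExact

section MittagLeffler

variable {R : Type u} [Ring R] {M : Type u} [AddCommGroup M] [Module Rᵐᵒᵖ M]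

theorem IsML.mem_range_mapB_piMap (hM : IsML R M) {ι' : Type u} {U V : ι' → Type u}
    [∀ l, AddCommGroup (U l)] [∀ l, Module R (U l)] [∀ l, AddCommGroup (V l)]
    [∀ l, Module R (V l)] (g : ∀ l, U l →ₗ[R] V l) {x : RTensor R M (∀ l, V l)}
    (hx : ∀ l, mapB R (LinearMap.proj l) x ∈ LinearMap.range (mapB R (g l))) :
    x ∈ LinearMap.range (mapB R (LinearMap.piMap g)) := by
  let q := LinearMap.piMap fun l => (LinearMap.range (g l)).mkQ
  have hexact : Function.Exact (LinearMap.piMap g) q := fun v => by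
    constructor
    · intro hv
      choose u hu using fun l => (Submodule.Quotient.mk_eq_zero _).1 (congrFun hv l)
      exact ⟨u, funext hu⟩
    · rintro ⟨u, rfl⟩
      exact funext fun l => (Submodule.Quotient.mk_eq_zero _).2 ⟨u l, rfl⟩
  have hq : Function.Surjective q :=
    Function.Surjective.piMap fun l => Submodule.mkQ_surjective _
  have hqx : canonicalL R M _ (mapB R q x) = 0 := funext fun l => by
    obtain ⟨y, hy⟩ := hx l
    show mapB R (LinearMap.proj l) (mapB R q x) = 0
    rw [← mapB_comp_apply, show LinearMap.proj l ∘ₗ q =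
      (LinearMap.range (g l)).mkQ ∘ₗ LinearMap.proj l from rfl, mapB_comp_apply, ← hy,
      ← mapB_comp_apply, LinearMap.range_mkQ_comp, mapB_zero, LinearMap.zero_apply]
  exact mem_range_mapB_of_exact R hexact hq
    (hM ι' _ inferInstance inferInstance (hqx.trans (map_zero _).symm))

end MittagLeffler

theorem piComm_comp_rightVecMul (R S : Type u) [Ring R] [Ring S] {ι' : Type u}
    (L : ι' → Type u) [∀ l, AddCommGroup (L l)] [∀ l, Module R (L l)]
    [∀ l, Module Sᵐᵒᵖ (L l)] [∀ l, SMulCommClass R Sᵐᵒᵖ (L l)] {τ ε : Type} [Fintype τ]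
    (C : Matrix τ ε S) :
    (LinearEquiv.piComm R fun (_ : ε) l => L l).toLinearMap ∘ₗ rightVecMul R S C =
      LinearMap.piMap (fun l => rightVecMul R S C (W := L l)) ∘ₗ
        (LinearEquiv.piComm R fun (_ : τ) l => L l).toLinearMap := by
  ext z l j
  simp [LinearEquiv.piComm, Function.swap, rightVecMul_apply, Finset.sum_apply]

/-- If `M` is a Mittag-Leffler right `R`-module and `(L_λ)` is a
family of `(R,S)`-bimodules, then the canonical map
`M ⊗_R ∏_λ L_λ → ∏_λ (M ⊗_R L_λ)` is a pure embedding of right `S`-modules. -/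
theorem statement9 (R S : Type u) [Ring R] [Ring S]
    (M : Type u) [AddCommGroup M] [Module Rᵐᵒᵖ M] (hM : IsML R M)
    (ι' : Type u) (L : ι' → Type u) [∀ i, AddCommGroup (L i)] [∀ i, Module R (L i)]
    [∀ i, Module Sᵐᵒᵖ (L i)] [∀ i, SMulCommClass R Sᵐᵒᵖ (L i)] :
    IsPureEmb S (canonicalB R S M L) := by
  classical
  refine ⟨fun x y hxy => hM ι' L inferInstance inferInstance (funext fun l => congrFun hxy l),
    fun ι _ σ a ha => ?_⟩
  obtain ⟨x, rfl⟩ : ∃ x, (fun i => mapB R (LinearMap.proj i) x) = a :=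
    ⟨piTensor R a, funext (mapB_proj_piTensor R a)⟩
  let e (τ : Type) := LinearEquiv.piComm R fun (_ : τ) l => L l
  have hfactor : ∀ l, (fun i => mapB R (LinearMap.proj i)
      (mapB R (LinearMap.proj l ∘ₗ (e ι).toLinearMap) x)) ∈ σ.sol (RTensor R M (L l)) := by
    intro l
    convert PP.sol_map (LinearMap.proj l) ha using 2 with i
    show _ = mapB R (LinearMap.proj l) (mapB R (LinearMap.proj i) x)
    simp only [← mapB_comp_apply]
    rfl
  simp only [mapB_proj_mem_sol_iff] at hfactor ⊢
  refine mem_range_mapB_of_comp_eq R (e σ.κ) (e σ.ε) (piComm_comp_rightVecMul R S L σ.B) ?_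
  rw [← mapB_comp_apply, piComm_comp_rightVecMul, mapB_comp_apply]
  refine hM.mem_range_mapB_piMap _ fun l => ?_
  rw [← mapB_comp_apply, show LinearMap.proj l ∘ₗ LinearMap.piMap _ = _ ∘ₗ LinearMap.proj l
    from rfl]
  simpa only [mapB_comp_apply] using hfactor l

end MTM
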